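/- arXiv:1101.3620 — 4 statements merged into one kernel-verified Lean document; each statement's English description precedes it below -/
import Mathlib

section
/- If a clustering instance satisfies the (2(1+α), ε)-approximation-stability property for the min-sum objective, then it satisfies the (1+α, ε)-property for the balanced k-median objective. -/
open Finset

variable {X : Type*} [MetricSpace X] [Fintype X] [DecidableEq X] {k : ℕ}

/-- A k-clustering: every point belongs to exactly one cluster. -/
def IsClustering (C : Fin k → Finset X) : Prop := ∀ x : X, ∃! i : Fin k, x ∈ C i

/-- The min-sum objective Φ(C) = Σ_i Σ_{x,y ∈ C_i} d(x,y). -/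
noncomputable def minSumObj (C : Fin k → Finset X) : ℝ :=
  ∑ i, ∑ x ∈ C i, ∑ y ∈ C i, dist x y

/-- The balanced k-median objective Ψ(C) = Σ_i |C_i| · min_{c ∈ C_i} Σ_{x ∈ C_i} d(x,c). -/
noncomputable def balancedKMedianObj (C : Fin k → Finset X) : ℝ :=
  ∑ i, ((C i).card : ℝ) * sInf {t : ℝ | ∃ c ∈ C i, t = ∑ x ∈ C i, dist x c}

/-- The optimum value of an objective Ω over all k-clusterings. -/
noncomputable def OPT (Ω : (Fin k → Finset X) → ℝ) : ℝ :=
  sInf {t : ℝ | ∃ C : Fin k → Finset X, IsClustering C ∧ Ω C = t}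

/-- Misclassification distance between two k-clusterings. -/
noncomputable def clusterDist (C C' : Fin k → Finset X) : ℝ :=
  (Finset.univ.inf' Finset.univ_nonempty
    (fun σ : Equiv.Perm (Fin k) => ∑ i, (((C i) \ (C' (σ i))).card : ℝ))) /
    (Fintype.card X)

/-- The (c,ε)-approximation-stability property for objective Ω w.r.t. target `CT`. -/
def HasApproxStability (Ω : (Fin k → Finset X) → ℝ) (CT : Fin k → Finset X)
    (c ε : ℝ) : Prop :=
  ∀ C : Fin k → Finset X, IsClustering C → Ω C ≤ c * OPT Ω → clusterDist C CT < ε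

section aux

variable {X : Type*} [MetricSpace X] [Fintype X] [DecidableEq X] {k : ℕ}

lemma medset_bdd (s : Finset X) :
    BddBelow {t : ℝ | ∃ c ∈ s, t = ∑ x ∈ s, dist x c} := by
  refine ⟨0, ?_⟩
  rintro t ⟨c, hc, rfl⟩
  positivity

lemma medset_nonneg (s : Finset X) :
    0 ≤ sInf {t : ℝ | ∃ c ∈ s, t = ∑ x ∈ s, dist x c} := by
  rcases s.eq_empty_or_nonempty with rfl | ⟨c, hc⟩
  · simp [Real.sInf_empty]
  · have hne' : Set.Nonempty {t : ℝ | ∃ c ∈ s, t = ∑ x ∈ s, dist x c} := ⟨_, c, hc, rfl⟩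
    apply le_csInf hne'
    rintro t ⟨c', hc', rfl⟩
    positivity

lemma psi_le_phi (C : Fin k → Finset X) : balancedKMedianObj C ≤ minSumObj C := by
  unfold balancedKMedianObj minSumObj
  apply Finset.sum_le_sum
  intro i _
  rcases (C i).eq_empty_or_nonempty with he | ⟨c0, hc0⟩
  · simp [he, Real.sInf_empty]
  · have hstep : ((C i).card : ℝ) * sInf {t : ℝ | ∃ c ∈ C i, t = ∑ x ∈ C i, dist x c}
        = ∑ c ∈ C i, sInf {t : ℝ | ∃ c' ∈ C i, t = ∑ x ∈ C i, dist x c'} := by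
      rw [Finset.sum_const, nsmul_eq_mul]
    rw [hstep]
    calc ∑ c ∈ C i, sInf {t : ℝ | ∃ c' ∈ C i, t = ∑ x ∈ C i, dist x c'}
        ≤ ∑ c ∈ C i, ∑ x ∈ C i, dist x c :=
          Finset.sum_le_sum (fun c hc => csInf_le (medset_bdd _) ⟨c, hc, rfl⟩)
      _ = ∑ x ∈ C i, ∑ y ∈ C i, dist x y := Finset.sum_comm


lemma phi_le_two_psi (C : Fin k → Finset X) : minSumObj C ≤ 2 * balancedKMedianObj C := by
  unfold balancedKMedianObj minSumObj
  rw [Finset.mul_sum]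
  apply Finset.sum_le_sum
  intro i _
  rcases (C i).eq_empty_or_nonempty with he | hne
  · simp [he]
  · set S := {t : ℝ | ∃ c ∈ C i, t = ∑ x ∈ C i, dist x c} with hS
    have key : ∀ c ∈ C i, ∑ x ∈ C i, ∑ y ∈ C i, dist x y
        ≤ 2 * (((C i).card : ℝ) * ∑ x ∈ C i, dist x c) := by
      intro c hc
      have h1 : ∑ x ∈ C i, ∑ y ∈ C i, dist x y
          ≤ ∑ x ∈ C i, ∑ y ∈ C i, (dist x c + dist c y) := by
        apply Finset.sum_le_sum; intro x _
        apply Finset.sum_le_sum; intro y _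
        exact dist_triangle x c y
      refine h1.trans_eq ?_
      have : ∑ x ∈ C i, ∑ y ∈ C i, (dist x c + dist c y)
          = ∑ x ∈ C i, (((C i).card : ℝ) * dist x c + ∑ y ∈ C i, dist c y) := by
        apply Finset.sum_congr rfl; intro x _
        rw [Finset.sum_add_distrib, Finset.sum_const, nsmul_eq_mul]
      rw [this, Finset.sum_add_distrib, Finset.sum_const, nsmul_eq_mul, ← Finset.mul_sum]
      have hsymm : ∑ y ∈ C i, dist c y = ∑ y ∈ C i, dist y c := by
        apply Finset.sum_congr rfl; intro y _; exact dist_comm c y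
      rw [hsymm]; ring
    obtain ⟨c0, hc0⟩ := hne
    have hcard : (0:ℝ) < ((C i).card : ℝ) := by
      exact_mod_cast Finset.card_pos.mpr ⟨c0, hc0⟩
    have hlb : (∑ x ∈ C i, ∑ y ∈ C i, dist x y) / (2 * ((C i).card : ℝ)) ≤ sInf S := by
      have hne' : Set.Nonempty S := ⟨_, c0, hc0, rfl⟩
      apply le_csInf hne'
      rintro t ⟨c, hc, rfl⟩
      rw [div_le_iff₀ (by positivity)]
      calc ∑ x ∈ C i, ∑ y ∈ C i, dist x y
          ≤ 2 * (((C i).card : ℝ) * ∑ x ∈ C i, dist x c) := key c hc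
        _ = (∑ x ∈ C i, dist x c) * (2 * ((C i).card : ℝ)) := by ring
    have := mul_le_mul_of_nonneg_left hlb (by positivity : (0:ℝ) ≤ 2 * ((C i).card : ℝ))
    calc ∑ x ∈ C i, ∑ y ∈ C i, dist x y
        = 2 * ((C i).card : ℝ) * ((∑ x ∈ C i, ∑ y ∈ C i, dist x y) / (2 * ((C i).card : ℝ))) := by
          field_simp
      _ ≤ 2 * ((C i).card : ℝ) * sInf S := this
      _ = 2 * (((C i).card : ℝ) * sInf S) := by ring

end aux


/-- If a clustering instance satisfies the (2(1+α), ε)-property for the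
min-sum objective, then it satisfies the (1+α, ε)-property for the balanced
k-median objective. -/
theorem stmt_1 (CT : Fin k → Finset X) (hCT : IsClustering CT)
    (α ε : ℝ) (hα : 0 ≤ α) (hε : 0 < ε)
    (h : HasApproxStability (minSumObj (X := X) (k := k)) CT (2 * (1 + α)) ε) :
    HasApproxStability (balancedKMedianObj (X := X) (k := k)) CT (1 + α) ε := by
  intro C hC hΨ
  have hne : ({t : ℝ | ∃ C : Fin k → Finset X, IsClustering C ∧ balancedKMedianObj C = t}).Nonempty :=
    ⟨_, CT, hCT, rfl⟩
  have hΨnn : ∀ C' : Fin k → Finset X, 0 ≤ balancedKMedianObj C' := by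
    intro C'
    apply Finset.sum_nonneg
    intro i _
    exact mul_nonneg (Nat.cast_nonneg _) (medset_nonneg _)
  have hbdd : BddBelow {t : ℝ | ∃ C : Fin k → Finset X, IsClustering C ∧ balancedKMedianObj C = t} := by
    refine ⟨0, ?_⟩
    rintro t ⟨C', _, rfl⟩
    exact hΨnn C'
  have hOPT : OPT (balancedKMedianObj (X := X) (k := k)) ≤ OPT (minSumObj (X := X) (k := k)) := by
    have hne' : Set.Nonempty {t : ℝ | ∃ C : Fin k → Finset X, IsClustering C ∧ minSumObj C = t} := ⟨_, CT, hCT, rfl⟩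
    apply le_csInf hne'
    rintro t ⟨C', hC', rfl⟩
    calc OPT (balancedKMedianObj (X := X) (k := k)) ≤ balancedKMedianObj C' :=
          csInf_le hbdd ⟨C', hC', rfl⟩
      _ ≤ minSumObj C' := psi_le_phi C'
  have hOPTnn : 0 ≤ OPT (balancedKMedianObj (X := X) (k := k)) := by
    apply le_csInf hne
    rintro t ⟨C', _, rfl⟩
    exact hΨnn C'
  apply h C hC
  calc minSumObj C ≤ 2 * balancedKMedianObj C := phi_le_two_psi C
    _ ≤ 2 * ((1 + α) * OPT (balancedKMedianObj (X := X) (k := k))) := by linarith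
    _ ≤ 2 * ((1 + α) * OPT (minSumObj (X := X) (k := k))) := by nlinarith
    _ = 2 * (1 + α) * OPT (minSumObj (X := X) (k := k)) := by ring
end

section
/- If x is a good point in optimal cluster C_i* and y is a good point in a different optimal cluster C_j*, then d(x,y) > (αw/(5ε)) / min(|C_i*|, |C_j*|). -/
open Finset

/-- If x is a good point in optimal cluster C_i* and y is a good point
in a different optimal cluster C_j*, then d(x,y) > (αw/(5ε)) / min(|C_i*|, |C_j*|).
A point x ∈ C_i* is good if |C_i*|·d(x,c_i*) ≤ αw/(120ε) and
min_{j'≠i}|C_j'*|·d(x,c_j'*) ≥ αw/(4ε). -/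
theorem stmt_3 {X : Type*} [MetricSpace X] {k : ℕ}
    (C : Fin k → Finset X) (c : Fin k → X) (i j : Fin k) (hij : i ≠ j)
    (α ε w : ℝ) (hα : 0 < α) (hε : 0 < ε) (hw : 0 < w)
    (x y : X) (hx : x ∈ C i) (hy : y ∈ C j)
    -- x is good
    (hgx1 : ((C i).card : ℝ) * dist x (c i) ≤ α * w / (120 * ε))
    (hgx2 : ∀ j', j' ≠ i → α * w / (4 * ε) ≤ ((C j').card : ℝ) * dist x (c j'))
    -- y is good
    (hgy1 : ((C j).card : ℝ) * dist y (c j) ≤ α * w / (120 * ε))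
    (hgy2 : ∀ j', j' ≠ j → α * w / (4 * ε) ≤ ((C j').card : ℝ) * dist y (c j')) :
    dist x y > (α * w / (5 * ε)) / min ((C i).card : ℝ) ((C j).card : ℝ) := by
  have hci : (0:ℝ) < (C i).card := by
    exact_mod_cast Finset.card_pos.mpr ⟨x, hx⟩
  have hcj : (0:ℝ) < (C j).card := by
    exact_mod_cast Finset.card_pos.mpr ⟨y, hy⟩
  have e1 : α * w / (4 * ε) = 30 * (α * w / (120 * ε)) := by
    field_simp; ring
  have e2 : α * w / (5 * ε) = 24 * (α * w / (120 * ε)) := by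
    field_simp; ring
  have h3 : 0 < α * w / (120 * ε) := by positivity
  rcases le_total ((C i).card : ℝ) ((C j).card : ℝ) with h | h
  · rw [min_eq_left h, gt_iff_lt, div_lt_iff₀ hci]
    have t1 := hgy2 i hij
    have t2 : dist y (c i) ≤ dist y x + dist x (c i) := dist_triangle y x (c i)
    have t3 : ((C i).card : ℝ) * dist y (c i) ≤ ((C i).card : ℝ) * (dist y x + dist x (c i)) :=
      by nlinarith
    rw [dist_comm x y]
    nlinarith
  · rw [min_eq_right h, gt_iff_lt, div_lt_iff₀ hcj]
    have t1 := hgx2 j hij.symm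
    have t2 : dist x (c j) ≤ dist x y + dist y (c j) := dist_triangle x y (c j)
    have t3 : ((C j).card : ℝ) * dist x (c j) ≤ ((C j).card : ℝ) * (dist x y + dist y (c j)) :=
      by nlinarith
    nlinarith
end

section
/- If a partition produced by the algorithm contains every good set X_1,...,X_k in distinct clusters (each cluster containing exactly one whole good set and no points of other good sets), and the optimal clustering C* is ε-close to C_T, and the number of bad points is at most b, then the output clustering is within distance (b/n) + ε of the target clustering C_T. -/
open Finset

variable {X : Type*} [Fintype X] [DecidableEq X] {k : ℕ}

/-!
Match the clusters of `C` to those of `C_T` by composing the bijection `σ` with an optimal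
matching `τ` of `C*` to `C_T`. A point of `C (σ i)` outside `B` lies in no good set `X_j` with
`j ≠ i`, hence in `C_i*`; so every point misclassified in `C (σ i)` is either misclassified in
`C_i*` or bad. Since the clusters of `C` are disjoint, each bad point is counted at most once,
which gives `dist(C, C_T) ≤ dist(C*, C_T) + |B| / n`.
-/

section Clusters

open Function

variable {α ι : Type*}

theorem pairwise_disjoint_of_existsUnique_mem {C : ι → Finset α} (hC : ∀ x, ∃! i, x ∈ C i) :
    Pairwise (Disjoint on C) := fun _ _ hij =>
  disjoint_left.2 fun x hi hj => hij ((hC x).unique hi hj)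

variable [DecidableEq α]

theorem card_sdiff_le_card_sdiff_add_card_inter {D A T B : Finset α} (h : D \ B ⊆ A) :
    #(D \ T) ≤ #(A \ T) + #(B ∩ D) := by
  refine (card_le_card fun x hx => ?_).trans (card_union_le _ _)
  rw [mem_sdiff] at hx
  by_cases hxB : x ∈ B
  · exact mem_union_right _ (mem_inter.2 ⟨hxB, hx.1⟩)
  · exact mem_union_left _ (mem_sdiff.2 ⟨h (mem_sdiff.2 ⟨hx.1, hxB⟩), hx.2⟩)

theorem sdiff_subset_of_disjoint_sdiff {A : ι → Finset α} (hA : ∀ x, ∃ i, x ∈ A i)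
    {D B : Finset α} {i : ι} (hD : ∀ j, j ≠ i → Disjoint D (A j \ B)) : D \ B ⊆ A i := by
  intro x hx
  rw [mem_sdiff] at hx
  obtain ⟨j, hj⟩ := hA x
  by_contra hxi
  have hji : j ≠ i := by rintro rfl; exact hxi hj
  exact disjoint_left.1 (hD j hji) hx.1 (mem_sdiff.2 ⟨hj, hx.2⟩)

theorem sum_card_inter_le_card [Fintype ι] {C : ι → Finset α} (hC : Pairwise (Disjoint on C))
    (B : Finset α) : ∑ i, #(B ∩ C i) ≤ #B := by
  have hdisj : ((univ : Finset ι) : Set ι).PairwiseDisjoint (fun i => B ∩ C i) :=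
    fun i _ j _ hij => (hC hij).mono inter_subset_right inter_subset_right
  rw [← card_biUnion hdisj]
  exact card_le_card (biUnion_subset.2 fun _ _ => inter_subset_left)

end Clusters

theorem exists_perm_clusterDist_eq (C C' : Fin k → Finset X) :
    ∃ τ : Equiv.Perm (Fin k),
      clusterDist C C' = (∑ i, (#(C i \ C' (τ i)) : ℝ)) / Fintype.card X := by
  obtain ⟨τ, -, hτ⟩ := exists_mem_eq_inf' (univ_nonempty (α := Equiv.Perm (Fin k)))
    (fun τ => ∑ i, (#(C i \ C' (τ i)) : ℝ))
  exact ⟨τ, by rw [clusterDist, hτ]⟩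

theorem clusterDist_le_of_perm (C C' : Fin k → Finset X) (ρ : Equiv.Perm (Fin k)) :
    clusterDist C C' ≤ (∑ i, (#(C i \ C' (ρ i)) : ℝ)) / Fintype.card X :=
  div_le_div_of_nonneg_right (inf'_le _ (mem_univ ρ)) (Nat.cast_nonneg _)

theorem clusterDist_le_add_card_div {CT Cstar C : Fin k → Finset X}
    (hCstar : ∀ x, ∃ i, x ∈ Cstar i) (hC : ∀ x, ∃! i, x ∈ C i) (B : Finset X)
    (σ : Equiv.Perm (Fin k)) (hpure : ∀ i j, j ≠ i → Disjoint (C (σ i)) (Cstar j \ B)) :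
    clusterDist C CT ≤ clusterDist Cstar CT + #B / Fintype.card X := by
  obtain ⟨τ, hτ⟩ := exists_perm_clusterDist_eq Cstar CT
  have hcount : ∑ i, #(C (σ i) \ CT (τ i)) ≤ ∑ i, #(Cstar i \ CT (τ i)) + #B :=
    calc ∑ i, #(C (σ i) \ CT (τ i))
        ≤ ∑ i, (#(Cstar i \ CT (τ i)) + #(B ∩ C (σ i))) := sum_le_sum fun i _ =>
          card_sdiff_le_card_sdiff_add_card_inter (sdiff_subset_of_disjoint_sdiff hCstar (hpure i))
      _ = ∑ i, #(Cstar i \ CT (τ i)) + ∑ i, #(B ∩ C i) := by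
          rw [sum_add_distrib, Equiv.sum_comp σ (fun i => #(B ∩ C i))]
      _ ≤ ∑ i, #(Cstar i \ CT (τ i)) + #B :=
          Nat.add_le_add_left (sum_card_inter_le_card (pairwise_disjoint_of_existsUnique_mem hC) B) _
  calc clusterDist C CT
      ≤ (∑ i, (#(C i \ CT ((σ.symm.trans τ) i)) : ℝ)) / Fintype.card X :=
        clusterDist_le_of_perm C CT _
    _ = (∑ i, (#(C (σ i) \ CT (τ i)) : ℝ)) / Fintype.card X := by
        rw [← Equiv.sum_comp σ]
        simp only [Equiv.trans_apply, Equiv.symm_apply_apply]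
    _ ≤ (∑ i, (#(Cstar i \ CT (τ i)) : ℝ) + #B) / Fintype.card X := by
        gcongr
        exact_mod_cast hcount
    _ = clusterDist Cstar CT + #B / Fintype.card X := by rw [hτ, add_div]

theorem stmt_17_general (CT Cstar C : Fin k → Finset X)
    (hCstar : ∀ x : X, ∃! i : Fin k, x ∈ Cstar i)
    (hC : ∀ x : X, ∃! i : Fin k, x ∈ C i)
    (n : ℕ) (hn : Fintype.card X = n)
    (ε : ℝ)
    (hclose : clusterDist Cstar CT < ε)
    (B : Finset X) (b : ℕ) (hB : B.card ≤ b)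
    (σ : Equiv.Perm (Fin k))
    (hpure : ∀ i j, j ≠ i → Disjoint (C (σ i)) ((Cstar j) \ B)) :
    clusterDist C CT < (b : ℝ) / n + ε := by
  have hbad : (#B : ℝ) / n ≤ b / n :=
    div_le_div_of_nonneg_right (by exact_mod_cast hB) (Nat.cast_nonneg n)
  have h := clusterDist_le_add_card_div (CT := CT) (fun x => (hCstar x).exists) hC B σ hpure
  rw [hn] at h
  linarith

/-- If a partition produced by the algorithm contains every good set
X_i = C_i* \ B in distinct clusters (each cluster containing exactly one whole good
set and no points of other good sets), the optimal clustering C* is ε-close to C_T,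
and the number of bad points is at most b, then the output clustering is within
distance (b/n) + ε of the target clustering C_T. -/
theorem stmt_17 (CT Cstar C : Fin k → Finset X)
    (hCT : ∀ x : X, ∃! i : Fin k, x ∈ CT i)
    (hCstar : ∀ x : X, ∃! i : Fin k, x ∈ Cstar i)
    (hC : ∀ x : X, ∃! i : Fin k, x ∈ C i)
    (n : ℕ) (hn : Fintype.card X = n) (hn0 : 0 < n)
    (ε : ℝ) (hε : 0 < ε)
    (hclose : clusterDist Cstar CT < ε)
    (B : Finset X) (b : ℕ) (hB : B.card ≤ b)
    (σ : Equiv.Perm (Fin k))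
    (hgood : ∀ i, (Cstar i) \ B ⊆ C (σ i))
    (hpure : ∀ i j, j ≠ i → Disjoint (C (σ i)) ((Cstar j) \ B)) :
    clusterDist C CT < (b : ℝ) / n + ε :=
  stmt_17_general CT Cstar C hCstar hC n hn ε hclose B b hB σ hpure
end

section
/- The misclassification distance dist(C,C') = min_{σ ∈ S_k} (1/n) Σ_i |C_i \ C'_{σ(i)}| between k-clusterings of an n-point set satisfies the triangle inequality: dist(C,C'') ≤ dist(C,C') + dist(C',C''). -/
/-! Composing optimal matchings `σ : C → C'` and `τ : C' → C''` gives a matching `σ.trans τ`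
from `C` to `C''`, whose cost is bounded part by part via `s \ u ⊆ (s \ t) ∪ (t \ u)`. -/

open Finset

variable {X : Type*} [Fintype X] [DecidableEq X] {k : ℕ}

theorem Finset.card_sdiff_le_card_sdiff_add_card_sdiff {α : Type*} [DecidableEq α]
    (s t u : Finset α) : #(s \ u) ≤ #(s \ t) + #(t \ u) :=
  (card_le_card (sdiff_triangle s t u)).trans (card_union_le _ _)

section MatchingCost

variable {α ι : Type*} [DecidableEq α] [Fintype ι]

noncomputable def matchingCost (C C' : ι → Finset α) (σ : Equiv.Perm ι) : ℝ :=
  ∑ i, (#(C i \ C' (σ i)) : ℝ)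

theorem matchingCost_trans_le (C C' C'' : ι → Finset α) (σ τ : Equiv.Perm ι) :
    matchingCost C C'' (σ.trans τ) ≤ matchingCost C C' σ + matchingCost C' C'' τ := by
  rw [matchingCost, matchingCost, matchingCost,
    ← Equiv.sum_comp σ (fun j => (#(C' j \ C'' (τ j)) : ℝ)), ← sum_add_distrib]
  gcongr with i
  exact_mod_cast card_sdiff_le_card_sdiff_add_card_sdiff _ _ _

theorem inf'_matchingCost_le_add [DecidableEq ι] (C C' C'' : ι → Finset α) :
    univ.inf' univ_nonempty (matchingCost C C'') ≤
      univ.inf' univ_nonempty (matchingCost C C') +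
        univ.inf' univ_nonempty (matchingCost C' C'') := by
  obtain ⟨σ, -, hσ⟩ := exists_mem_eq_inf' univ_nonempty (matchingCost C C')
  obtain ⟨τ, -, hτ⟩ := exists_mem_eq_inf' univ_nonempty (matchingCost C' C'')
  rw [hσ, hτ]
  exact (inf'_le _ (mem_univ _)).trans (matchingCost_trans_le C C' C'' σ τ)

end MatchingCost

theorem stmt_18_general (C C' C'' : Fin k → Finset X) :
    clusterDist C C'' ≤ clusterDist C C' + clusterDist C' C'' := by
  rw [clusterDist, clusterDist, clusterDist, ← add_div]
  exact div_le_div_of_nonneg_right (inf'_matchingCost_le_add C C' C'') (Nat.cast_nonneg _)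

/-- The misclassification distance between k-clusterings of an n-point
set satisfies the triangle inequality: dist(C,C'') ≤ dist(C,C') + dist(C',C''). -/
theorem stmt_18 (C C' C'' : Fin k → Finset X)
    (hC : ∀ x : X, ∃! i : Fin k, x ∈ C i)
    (hC' : ∀ x : X, ∃! i : Fin k, x ∈ C' i)
    (hC'' : ∀ x : X, ∃! i : Fin k, x ∈ C'' i) :
    clusterDist C C'' ≤ clusterDist C C' + clusterDist C' C'' :=
  stmt_18_general C C' C''
end
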